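/- Suppose f : ℝ → ℝ satisfies |f^{(m)}(a)| ≤ K^m (m!)^κ for all m ∈ ℕ, where K > 0 and κ ∈ [0, 1/2). Then for every t ≥ 0 the series Σ_{k even, k ≥ 2} |f^{(k)}(a)| t^{Hk} / (2^{k/2} (k/2)!) converges, where H ∈ (0,1). -/

import Mathlib

/-!
Halving the even index `k = 2m` turns the hypothesis into
`|f^{(2m)}(a)| ≤ (4^κ K²)^m (m!)^{2κ}`, because `(2m)! ≤ 4^m (m!)²`. The `m`-th term is then at
most `C^m / (m!)^{1 - 2κ}` with `C = 4^κ K² t^{2H} / 2`, and `1 - 2κ > 0` makes this summable by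
the ratio test.
-/

open Filter Topology Nat

lemma Nat.factorial_two_mul_le_four_pow_mul_sq (m : ℕ) : (2 * m)! ≤ 4 ^ m * m ! ^ 2 := by
  have hsplit : (2 * m)! = centralBinom m * m ! * m ! := by
    rw [centralBinom_eq_two_mul_choose, ← choose_mul_factorial_mul_factorial (by omega : m ≤ 2 * m),
      show 2 * m - m = m by omega]
  rw [hsplit, mul_assoc, ← sq]
  exact Nat.mul_le_mul_right _ (centralBinom_le_four_pow m)

lemma factorial_two_mul_rpow_le {κ : ℝ} (hκ : 0 ≤ κ) (m : ℕ) :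
    ((2 * m)! : ℝ) ^ κ ≤ ((4 : ℝ) ^ κ) ^ m * (m ! : ℝ) ^ (2 * κ) := by
  have hle : ((2 * m)! : ℝ) ≤ 4 ^ m * (m ! : ℝ) ^ 2 := by
    exact_mod_cast Nat.factorial_two_mul_le_four_pow_mul_sq m
  calc ((2 * m)! : ℝ) ^ κ ≤ (4 ^ m * (m ! : ℝ) ^ 2) ^ κ := by gcongr
    _ = ((4 : ℝ) ^ κ) ^ m * (m ! : ℝ) ^ (2 * κ) := by
      rw [Real.mul_rpow (by positivity) (by positivity), ← Real.rpow_pow_comm (by norm_num),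
        ← Real.rpow_natCast_mul (by positivity), Nat.cast_ofNat]

lemma summable_pow_div_factorial_rpow (C : ℝ) {ε : ℝ} (hε : 0 < ε) :
    Summable fun n : ℕ => C ^ n / (n ! : ℝ) ^ ε := by
  have hratio : Tendsto (fun n : ℕ => |C| * ((n : ℝ) + 1) ^ (-ε)) atTop (𝓝 0) := by
    simpa using ((tendsto_rpow_neg_atTop hε).comp
      (tendsto_atTop_add_const_right _ 1 tendsto_natCast_atTop_atTop)).const_mul |C|
  refine summable_of_ratio_norm_eventually_le (r := 1 / 2) (by norm_num) ?_
  filter_upwards [hratio.eventually_le_const (by norm_num : (0 : ℝ) < 1 / 2)] with n hn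
  have hfac : (0 : ℝ) < n ! := by exact_mod_cast factorial_pos n
  have hsucc : ((n + 1)! : ℝ) ^ ε = ((n : ℝ) + 1) ^ ε * (n ! : ℝ) ^ ε := by
    rw [factorial_succ, Nat.cast_mul, Nat.cast_succ, Real.mul_rpow (by positivity) hfac.le]
  calc ‖C ^ (n + 1) / ((n + 1)! : ℝ) ^ ε‖
      = |C| * ((n : ℝ) + 1) ^ (-ε) * ‖C ^ n / (n ! : ℝ) ^ ε‖ := by
        rw [Real.norm_eq_abs, Real.norm_eq_abs, hsucc, Real.rpow_neg (by positivity)]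
        simp only [abs_div, abs_pow, abs_mul, pow_succ,
          abs_of_pos (Real.rpow_pos_of_pos hfac ε),
          abs_of_pos (Real.rpow_pos_of_pos (by positivity : (0 : ℝ) < n + 1) ε)]
        field_simp
    _ ≤ 1 / 2 * ‖C ^ n / (n ! : ℝ) ^ ε‖ := by gcongr

theorem series_summable_general (f : ℝ → ℝ) (a K κ H : ℝ)
    (hκ : κ ∈ Set.Ico (0 : ℝ) (1 / 2))
    (hf : ∀ m : ℕ, |iteratedDeriv m f a| ≤ K ^ m * (Nat.factorial m : ℝ) ^ κ)
    (t : ℝ) (ht : 0 ≤ t) :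
    Summable (fun j : ℕ =>
      |iteratedDeriv (2 * (j + 1)) f a| * t ^ (H * (2 * ((j : ℝ) + 1)))
        / (2 ^ (j + 1) * (Nat.factorial (j + 1) : ℝ))) := by
  obtain ⟨hκ0, hκ2⟩ := hκ
  set T := t ^ (2 * H)
  set C := (4 : ℝ) ^ κ * K ^ 2 * T / 2
  have hsum : Summable fun j : ℕ => C ^ (j + 1) / ((j + 1)! : ℝ) ^ (1 - 2 * κ) :=
    (summable_nat_add_iff 1).mpr (summable_pow_div_factorial_rpow C (by linarith))
  refine hsum.of_nonneg_of_le (fun j => by positivity) (fun j => ?_)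
  have hfac : (0 : ℝ) < (j + 1)! := by exact_mod_cast factorial_pos _
  have htT : t ^ (H * (2 * ((j : ℝ) + 1))) = T ^ (j + 1) := by
    rw [← Real.rpow_mul_natCast ht]; push_cast; ring_nf
  have hderiv : |iteratedDeriv (2 * (j + 1)) f a|
      ≤ K ^ (2 * (j + 1)) * (((4 : ℝ) ^ κ) ^ (j + 1) * ((j + 1)! : ℝ) ^ (2 * κ)) :=
    (hf _).trans <|
      mul_le_mul_of_nonneg_left (factorial_two_mul_rpow_le hκ0 _) ((even_two_mul _).pow_nonneg K)
  calc |iteratedDeriv (2 * (j + 1)) f a| * t ^ (H * (2 * ((j : ℝ) + 1)))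
        / (2 ^ (j + 1) * ((j + 1)! : ℝ))
      ≤ K ^ (2 * (j + 1)) * (((4 : ℝ) ^ κ) ^ (j + 1) * ((j + 1)! : ℝ) ^ (2 * κ))
        * T ^ (j + 1) / (2 ^ (j + 1) * ((j + 1)! : ℝ)) := by
        rw [htT]; gcongr
    _ = C ^ (j + 1) / ((j + 1)! : ℝ) ^ (1 - 2 * κ) := by
        rw [Real.rpow_sub hfac, Real.rpow_one, pow_mul]
        simp only [C, div_pow, mul_pow]
        field_simp

/-- If `|f^{(m)}(a)| ≤ K^m (m!)^κ` for all `m ∈ ℕ`, with `K > 0` and `κ ∈ [0,1/2)`, then for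
every `t ≥ 0` the series `∑_{k even, k ≥ 2} |f^{(k)}(a)| t^{Hk} / (2^{k/2} (k/2)!)` converges
(here `H ∈ (0,1)`; the even indices `k ≥ 2` are parametrized as `k = 2(j+1)`, `j ∈ ℕ`). -/
theorem series_summable (f : ℝ → ℝ) (a K κ H : ℝ) (hK : 0 < K)
    (hκ : κ ∈ Set.Ico (0 : ℝ) (1 / 2)) (hH : H ∈ Set.Ioo (0 : ℝ) 1)
    (hf : ∀ m : ℕ, |iteratedDeriv m f a| ≤ K ^ m * (Nat.factorial m : ℝ) ^ κ)
    (t : ℝ) (ht : 0 ≤ t) :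
    Summable (fun j : ℕ =>
      |iteratedDeriv (2 * (j + 1)) f a| * t ^ (H * (2 * ((j : ℝ) + 1)))
        / (2 ^ (j + 1) * (Nat.factorial (j + 1) : ℝ))) :=
  series_summable_general f a K κ H hκ hf t ht
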